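/- There are exactly 7 numerical semigroups of genus 4. -/
import Mathlib

set_option maxRecDepth 10000

def IsNumericalSemigroup (Λ : Set ℕ) : Prop :=
  0 ∈ Λ ∧ (∀ a b, a ∈ Λ → b ∈ Λ → a + b ∈ Λ) ∧ (Λᶜ).Finite

def IsConductor (Λ : Set ℕ) (c : ℕ) : Prop :=
  c - 1 ∉ Λ ∧ ∀ n, c ≤ n → n ∈ Λ

def IsMinimalGenerator (Λ : Set ℕ) (l : ℕ) : Prop :=
  l ∈ Λ ∧ l ≠ 0 ∧ ∀ a b, a ∈ Λ → b ∈ Λ → a ≠ 0 → b ≠ 0 → l ≠ a + b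

/-- The classification of "gap sets" of genus-4 numerical semigroups, by enumeration. -/
lemma ns_classify : ∀ F : Finset (Fin 8), (0 : Fin 8) ∉ F → F.card = 4 →
    (∀ c ∈ F, ∀ a b : Fin 8, (a : ℕ) + (b : ℕ) = (c : ℕ) → a ∈ F ∨ b ∈ F) →
    (F.image Fin.val = ({1,2,3,4} : Finset ℕ) ∨ F.image Fin.val = ({1,2,3,5} : Finset ℕ) ∨
     F.image Fin.val = ({1,2,3,6} : Finset ℕ) ∨ F.image Fin.val = ({1,2,3,7} : Finset ℕ) ∨
     F.image Fin.val = ({1,2,4,5} : Finset ℕ) ∨ F.image Fin.val = ({1,2,4,7} : Finset ℕ) ∨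
     F.image Fin.val = ({1,3,5,7} : Finset ℕ)) := by decide

lemma ns_card5 {a b c d e : ℕ} (h1 : a ≠ b) (h2 : a ≠ c) (h3 : a ≠ d) (h4 : a ≠ e)
    (h5 : b ≠ c) (h6 : b ≠ d) (h7 : b ≠ e) (h8 : c ≠ d) (h9 : c ≠ e) (h10 : d ≠ e) :
    ({a, b, c, d, e} : Finset ℕ).card = 5 := by
  rw [Finset.card_insert_of_notMem (by simp [h1, h2, h3, h4]),
      Finset.card_insert_of_notMem (by simp [h5, h6, h7]),
      Finset.card_insert_of_notMem (by simp [h8, h9]),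
      Finset.card_insert_of_notMem (by simp [h10]), Finset.card_singleton]

/-- Every gap of a genus-4 numerical semigroup is less than 8. -/
lemma ns_gaps_lt_eight {Λ : Set ℕ} (h0 : 0 ∈ Λ)
    (hadd : ∀ a b, a ∈ Λ → b ∈ Λ → a + b ∈ Λ) (hfin : (Λᶜ).Finite)
    (hc : (Λᶜ).ncard = 4) {n : ℕ} (hn : 8 ≤ n) : n ∈ Λ := by
  by_contra hng
  have pair : ∀ k, k ≤ 4 → ∃ x, x ∉ Λ ∧ (x = k ∨ x = n - k) := by
    intro k hk
    by_cases h1 : k ∈ Λ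
    · refine ⟨n - k, fun hx => ?_, Or.inr rfl⟩
      have := hadd k (n - k) h1 hx
      rw [Nat.add_sub_cancel' (by omega)] at this
      exact hng this
    · exact ⟨k, h1, Or.inl rfl⟩
  obtain ⟨x1, hx1, hx1'⟩ := pair 1 (by omega)
  obtain ⟨x2, hx2, hx2'⟩ := pair 2 (by omega)
  obtain ⟨x3, hx3, hx3'⟩ := pair 3 (by omega)
  obtain ⟨x4, hx4, hx4'⟩ := pair 4 (by omega)
  have hsub : ({x1, x2, x3, x4, n} : Finset ℕ) ⊆ hfin.toFinset := by
    intro x hx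
    rw [Set.Finite.mem_toFinset]
    simp only [Finset.mem_insert, Finset.mem_singleton] at hx
    rcases hx with rfl | rfl | rfl | rfl | rfl <;> assumption
  have h5 : ({x1, x2, x3, x4, n} : Finset ℕ).card = 5 :=
    ns_card5 (by omega) (by omega) (by omega) (by omega) (by omega)
      (by omega) (by omega) (by omega) (by omega) (by omega)
  have hle := Finset.card_le_card hsub
  rw [h5, ← Set.ncard_eq_toFinset_card _ hfin, hc] at hle
  omega

lemma ns_helper (X : Finset ℕ) (h0 : 0 ∉ X)
    (hcl : ∀ a b : ℕ, a ∉ X → b ∉ X → a + b ∉ X) (hc : X.card = 4) :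
    IsNumericalSemigroup (↑X : Set ℕ)ᶜ ∧ (((↑X : Set ℕ)ᶜ)ᶜ).ncard = 4 := by
  refine ⟨⟨h0, fun a b ha hb => hcl a b ha hb, ?_⟩, ?_⟩
  · rw [compl_compl]; exact X.finite_toSet
  · rw [compl_compl, Set.ncard_coe_finset, hc]

theorem stmt6 :
    ({Λ : Set ℕ | IsNumericalSemigroup Λ ∧ (Λᶜ).ncard = 4}).ncard = 7 := by
  classical
  set T : Finset (Finset ℕ) :=
    {({1,2,3,4} : Finset ℕ), {1,2,3,5}, {1,2,3,6}, {1,2,3,7}, {1,2,4,5}, {1,2,4,7}, {1,3,5,7}}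
    with hT
  have finj : Function.Injective (fun X : Finset ℕ => (↑X : Set ℕ)ᶜ) := by
    intro X Y h
    exact Finset.coe_injective (compl_injective h)
  have hS : {Λ : Set ℕ | IsNumericalSemigroup Λ ∧ (Λᶜ).ncard = 4}
      = ↑(T.image (fun X : Finset ℕ => (↑X : Set ℕ)ᶜ)) := by
    ext Λ
    simp only [Set.mem_setOf_eq, Finset.coe_image, Set.mem_image, Finset.mem_coe]
    constructor
    · rintro ⟨⟨h0, hadd, hfin⟩, hcard⟩
      have h8 : ∀ n : ℕ, 8 ≤ n → n ∈ Λ := fun n hn =>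
        ns_gaps_lt_eight h0 hadd hfin hcard hn
      have hbound : ∀ m ∈ hfin.toFinset, m < 8 := by
        intro m hm
        rw [Set.Finite.mem_toFinset] at hm
        by_contra hc
        exact hm (h8 m (by omega))
      set F : Finset (Fin 8) := hfin.toFinset.attachFin hbound with hF
      have hmem : ∀ i : Fin 8, i ∈ F ↔ (i : ℕ) ∉ Λ := by
        intro i
        rw [hF, Finset.mem_attachFin, Set.Finite.mem_toFinset]
        rfl
      have himg : F.image Fin.val = hfin.toFinset := by
        ext m
        simp only [Finset.mem_image]
        constructor
        · rintro ⟨i, hi, rfl⟩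
          rw [Set.Finite.mem_toFinset]
          exact (hmem i).1 hi
        · intro hm
          exact ⟨⟨m, hbound m hm⟩, by rw [hmem]; rw [Set.Finite.mem_toFinset] at hm; exact hm, rfl⟩
      have hcls := ns_classify F
        (by rw [hmem]; simp [h0])
        (by rw [hF, Finset.card_attachFin, ← Set.ncard_eq_toFinset_card _ hfin, hcard])
        (by
          intro c hc a b hab
          by_contra hcon
          push_neg at hcon
          obtain ⟨ha, hb⟩ := hcon
          rw [hmem] at ha hb hc
          push_neg at ha hb
          have := hadd _ _ ha hb
          rw [hab] at this
          exact hc this)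
      have hT' : hfin.toFinset ∈ T := by
        rw [← himg, hT]
        rcases hcls with h | h | h | h | h | h | h <;> simp [h]
      refine ⟨hfin.toFinset, hT', ?_⟩
      rw [Set.Finite.coe_toFinset, compl_compl]
    · rintro ⟨X, hX, rfl⟩
      have : X ∈ T := hX
      fin_cases this <;>
        exact ns_helper _ (by decide)
          (fun a b ha hb hab => by
            simp only [Finset.mem_insert, Finset.mem_singleton] at ha hb hab
            omega)
          (by decide)
  rw [hS, Set.ncard_coe_finset, Finset.card_image_of_injective _ finj]
  decide
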